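/- For P' = {a, b, c, d} as above with 0 < x < 2 − √3, the zero-dimensional persistence of the Delaunay-Rips filtration consists of one class with infinite persistence born at 0, two classes (0, √(1−x+x²)), and one class (0, √3): i.e., the number of connected components of the sublevel complex at scale t is 4 for 0 ≤ t < √(1−x+x²), 2 for √(1−x+x²) ≤ t < √3, and 1 for t ≥ √3. -/
import Mathlib


attribute [local instance] Classical.propDecidable

/-- The Delaunay-Rips scale of each simplex of the 4-point configuration
`a = 0 = (−1,0)`, `b = 1 = (1/2,√3/2)`, `c = 2 = (1/2,−√3/2)`, `d = 3 = (1−x,0)`. -/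
noncomputable def scale (x : ℝ) (σ : Finset (Fin 4)) : ℝ :=
  if σ.card ≤ 1 then 0
  else if σ = {1, 3} ∨ σ = {2, 3} then Real.sqrt (1 - x + x ^ 2)
  else if σ = {0, 1} ∨ σ = {0, 2} then Real.sqrt 3
  else 2 - x

/-- The Delaunay-Rips sublevel complex at scale `t` of the 4-point configuration. -/
def sublevel (x t : ℝ) : Set (Finset (Fin 4)) :=
  {σ | (σ = {0} ∨ σ = {1} ∨ σ = {2} ∨ σ = {3} ∨
        σ = {1, 3} ∨ σ = {2, 3} ∨ σ = {0, 1} ∨ σ = {0, 2} ∨ σ = {0, 3} ∨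
        σ = {0, 1, 3} ∨ σ = {0, 2, 3}) ∧ scale x σ ≤ t}

/-- The 1-skeleton of the sublevel complex at scale `t`, as a simple graph on
the four vertices. -/
noncomputable def oneSkeleton (x t : ℝ) : SimpleGraph (Fin 4) :=
  SimpleGraph.fromRel (fun u v => ({u, v} : Finset (Fin 4)) ∈ sublevel x t)

/- Auxiliary lemmas -/

lemma scale13 (x : ℝ) : scale x {1,3} = Real.sqrt (1-x+x^2) := by
  rw [scale, if_neg (by decide), if_pos (by decide)]

lemma scale23 (x : ℝ) : scale x {2,3} = Real.sqrt (1-x+x^2) := by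
  rw [scale, if_neg (by decide), if_pos (by decide)]

lemma scale01 (x : ℝ) : scale x {0,1} = Real.sqrt 3 := by
  rw [scale, if_neg (by decide), if_neg (by decide), if_pos (by decide)]

lemma scale02 (x : ℝ) : scale x {0,2} = Real.sqrt 3 := by
  rw [scale, if_neg (by decide), if_neg (by decide), if_pos (by decide)]

lemma scale03 (x : ℝ) : scale x {0,3} = 2 - x := by
  rw [scale, if_neg (by decide), if_neg (by decide), if_neg (by decide)]

lemma adj_iff (x t : ℝ) (u v : Fin 4) :
    (oneSkeleton x t).Adj u v ↔ u ≠ v ∧ ({u, v} : Finset (Fin 4)) ∈ sublevel x t := by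
  rw [oneSkeleton, SimpleGraph.fromRel_adj, Finset.pair_comm v u, or_self]

lemma not_mem_sublevel (x t : ℝ) (σ : Finset (Fin 4)) (h : t < scale x σ) :
    σ ∉ sublevel x t := fun hm => absurd hm.2 (not_le.2 h)

/-- For `0 < x < 2 − √3`, the number of connected components of
the sublevel complex of the Delaunay-Rips filtration of the 4-point
configuration is `4` for `0 ≤ t < √(1−x+x²)`, `2` for `√(1−x+x²) ≤ t < √3`, and
`1` for `t ≥ √3` (so the `H_0` persistence diagram consists of one class
`(0, ∞)`, two classes `(0, √(1−x+x²))`, and one class `(0, √3)`). -/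
theorem four_point_H0 (x : ℝ) (hx0 : 0 < x) (hx1 : x < 2 - Real.sqrt 3) (t : ℝ) :
    (0 ≤ t → t < Real.sqrt (1 - x + x ^ 2) →
      Nat.card (oneSkeleton x t).ConnectedComponent = 4) ∧
    (Real.sqrt (1 - x + x ^ 2) ≤ t → t < Real.sqrt 3 →
      Nat.card (oneSkeleton x t).ConnectedComponent = 2) ∧
    (Real.sqrt 3 ≤ t →
      Nat.card (oneSkeleton x t).ConnectedComponent = 1) := by
  have h13 : (1:ℝ) < Real.sqrt 3 := by
    rw [show (1:ℝ) = Real.sqrt 1 by simp]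
    exact Real.sqrt_lt_sqrt (by norm_num) (by norm_num)
  have hx2 : x < 1 := by linarith
  have hpos : (0:ℝ) ≤ 1 - x + x ^ 2 := by nlinarith
  have hlt : Real.sqrt (1 - x + x ^ 2) < Real.sqrt 3 :=
    Real.sqrt_lt_sqrt hpos (by nlinarith)
  have h2x : Real.sqrt 3 ≤ 2 - x := by linarith
  refine ⟨?_, ?_, ?_⟩
  · -- Regime 1 : no edges at all
    intro ht0 ht1
    have hbot : oneSkeleton x t = ⊥ := by
      ext u v
      simp only [SimpleGraph.bot_adj, iff_false]
      rw [adj_iff]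
      rintro ⟨hne, hmem⟩
      obtain ⟨hσ, hsc⟩ := hmem
      have hcard : ({u, v} : Finset (Fin 4)).card = 2 := Finset.card_pair hne
      rcases hσ with h|h|h|h|h|h|h|h|h|h|h
      · rw [h] at hcard; exact absurd hcard (by decide)
      · rw [h] at hcard; exact absurd hcard (by decide)
      · rw [h] at hcard; exact absurd hcard (by decide)
      · rw [h] at hcard; exact absurd hcard (by decide)
      · rw [h, scale13] at hsc; linarith
      · rw [h, scale23] at hsc; linarith
      · rw [h, scale01] at hsc; linarith
      · rw [h, scale02] at hsc; linarith
      · rw [h, scale03] at hsc; linarith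
      · rw [h] at hcard; exact absurd hcard (by decide)
      · rw [h] at hcard; exact absurd hcard (by decide)
    rw [hbot]
    have hbij : Function.Bijective
        (SimpleGraph.connectedComponentMk (⊥ : SimpleGraph (Fin 4))) := by
      constructor
      · intro a b hab
        exact SimpleGraph.reachable_bot.mp (SimpleGraph.ConnectedComponent.eq.mp hab)
      · intro c
        exact c.ind (fun v => ⟨v, rfl⟩)
    rw [← Nat.card_congr (Equiv.ofBijective _ hbij)]
    simp [Nat.card_eq_fintype_card]
  · -- Regime 2 : edges 1-3 and 2-3 only
    intro ht0 ht1
    have ha13 : (oneSkeleton x t).Adj 1 3 :=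
      (adj_iff x t 1 3).mpr ⟨by decide, ⟨by tauto, by rw [scale13]; exact ht0⟩⟩
    have ha23 : (oneSkeleton x t).Adj 2 3 :=
      (adj_iff x t 2 3).mpr ⟨by decide, ⟨by tauto, by rw [scale23]; exact ht0⟩⟩
    have h0 : ∀ w, ¬ (oneSkeleton x t).Adj 0 w := by
      intro w
      rw [adj_iff]
      rintro ⟨hne, hmem⟩
      fin_cases w
      · exact hne rfl
      · exact not_mem_sublevel x t _ (show t < scale x {0, 1} by rw [scale01]; linarith) hmem
      · exact not_mem_sublevel x t _ (show t < scale x {0, 2} by rw [scale02]; linarith) hmem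
      · exact not_mem_sublevel x t _ (show t < scale x {0, 3} by rw [scale03]; linarith) hmem
    have hiso : ∀ w, (oneSkeleton x t).Reachable 0 w → w = 0 := by
      intro w hr
      obtain ⟨p⟩ := hr
      cases p with
      | nil => rfl
      | cons h q => exact absurd h (h0 _)
    set g : Fin 4 → Fin 2 := fun v => if v = 0 then 0 else 1 with hg
    have hwell : ∀ v w : Fin 4, ∀ p : (oneSkeleton x t).Walk v w, p.IsPath → g v = g w := by
      intro v w p _
      have hr : (oneSkeleton x t).Reachable v w := ⟨p⟩
      by_cases hv : v = 0
      · subst hv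
        rw [hiso w hr]
      · by_cases hw : w = 0
        · subst hw
          exact absurd (hiso v hr.symm) hv
        · simp [hg, hv, hw]
    set f := SimpleGraph.ConnectedComponent.lift g hwell with hf
    have key : ∀ v w : Fin 4, g v = g w → (oneSkeleton x t).Reachable v w := by
      have r13 : (oneSkeleton x t).Reachable 1 3 := ha13.reachable
      have r23 : (oneSkeleton x t).Reachable 2 3 := ha23.reachable
      have r12 : (oneSkeleton x t).Reachable 1 2 := r13.trans r23.symm
      intro v w hgvw
      fin_cases v <;> fin_cases w <;>
        first
          | rfl
          | exact (SimpleGraph.Reachable.refl _)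
          | exact r12 | exact r12.symm | exact r13 | exact r13.symm
          | exact r23 | exact r23.symm
          | exact absurd hgvw (by simp [hg])
    have hbij : Function.Bijective f := by
      constructor
      · refine SimpleGraph.ConnectedComponent.ind₂ ?_
        intro v w h
        rw [hf, SimpleGraph.ConnectedComponent.lift_mk,
          SimpleGraph.ConnectedComponent.lift_mk] at h
        exact SimpleGraph.ConnectedComponent.sound (key v w h)
      · intro y
        fin_cases y
        · exact ⟨(oneSkeleton x t).connectedComponentMk 0,
            by rw [hf, SimpleGraph.ConnectedComponent.lift_mk]; simp [hg]⟩
        · exact ⟨(oneSkeleton x t).connectedComponentMk 1,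
            by rw [hf, SimpleGraph.ConnectedComponent.lift_mk]; simp [hg]⟩
    rw [Nat.card_congr (Equiv.ofBijective f hbij)]
    simp [Nat.card_eq_fintype_card]
  · -- Regime 3 : connected
    intro ht0
    have ha13 : (oneSkeleton x t).Adj 1 3 :=
      (adj_iff x t 1 3).mpr ⟨by decide, ⟨by tauto, by rw [scale13]; linarith⟩⟩
    have ha23 : (oneSkeleton x t).Adj 2 3 :=
      (adj_iff x t 2 3).mpr ⟨by decide, ⟨by tauto, by rw [scale23]; linarith⟩⟩
    have ha01 : (oneSkeleton x t).Adj 0 1 :=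
      (adj_iff x t 0 1).mpr ⟨by decide, ⟨by tauto, by rw [scale01]; linarith⟩⟩
    have hall : ∀ v : Fin 4, (oneSkeleton x t).Reachable 0 v := by
      intro v
      fin_cases v
      · exact SimpleGraph.Reachable.refl _
      · exact ha01.reachable
      · exact (ha01.reachable.trans ha13.reachable).trans ha23.reachable.symm
      · exact ha01.reachable.trans ha13.reachable
    rw [Nat.card_eq_one_iff_unique]
    constructor
    · constructor
      intro a b
      refine SimpleGraph.ConnectedComponent.ind₂ ?_ a b
      intro v w
      exact SimpleGraph.ConnectedComponent.sound ((hall v).symm.trans (hall w))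
    · exact ⟨(oneSkeleton x t).connectedComponentMk 0⟩
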